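/- Let x = sqrt(1-||z||^2) u + z and x' = sqrt(1-||z'||^2) u + z' be unit vectors with z, z' orthogonal to the unit vector u and ||z||, ||z'|| <= nu < 1. Then ||x - x'|| <= (1/sqrt(1-nu^2)) ||z - z'||. -/

import Mathlib

/-!
Write `x - x' = (s - t) • u + (z - z')` with `s = √(1 - ‖z‖²)`, `t = √(1 - ‖z'‖²)`. The two
summands are orthogonal, so `‖x - x'‖² = (s - t)² + ‖z - z'‖²`. Since `√(1 - a²)` has slope at most
`ν / √(1 - ν²)` on `[-ν, ν]` and `|‖z‖ - ‖z'‖| ≤ ‖z - z'‖`, this is at most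
`(ν² / (1 - ν²) + 1) ‖z - z'‖² = ‖z - z'‖² / (1 - ν²)`.
-/

open scoped RealInnerProductSpace

lemma abs_sqrt_one_sub_sq_sub_sqrt_one_sub_sq_le {a b ν : ℝ} (ha : |a| ≤ ν) (hb : |b| ≤ ν)
    (hν : ν < 1) :
    |√(1 - a ^ 2) - √(1 - b ^ 2)| ≤ ν / √(1 - ν ^ 2) * |a - b| := by
  have hν2 : 0 < 1 - ν ^ 2 := by nlinarith [abs_nonneg a]
  set r := √(1 - ν ^ 2)
  set s := √(1 - a ^ 2)
  set t := √(1 - b ^ 2)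
  have hr : 0 < r := Real.sqrt_pos.mpr hν2
  have hrs : r ≤ s := Real.sqrt_le_sqrt (by nlinarith [sq_abs a, abs_nonneg a])
  have hrt : r ≤ t := Real.sqrt_le_sqrt (by nlinarith [sq_abs b, abs_nonneg b])
  have hs2 : s ^ 2 = 1 - a ^ 2 := Real.sq_sqrt (by nlinarith [sq_abs a, abs_nonneg a])
  have ht2 : t ^ 2 = 1 - b ^ 2 := Real.sq_sqrt (by nlinarith [sq_abs b, abs_nonneg b])
  have hprod : |s - t| * (s + t) = |a - b| * |a + b| := by
    rw [← abs_of_pos (by linarith : 0 < s + t), ← abs_mul, ← abs_mul]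
    rw [show (s - t) * (s + t) = -((a - b) * (a + b)) by nlinarith, abs_neg]
  have hab : |a + b| ≤ 2 * ν := (abs_add_le a b).trans (by linarith)
  rw [div_mul_eq_mul_div, le_div_iff₀ hr]
  calc |s - t| * r ≤ |s - t| * ((s + t) / 2) := by gcongr; linarith
    _ = |a - b| * |a + b| / 2 := by rw [← hprod]; ring
    _ ≤ ν * |a - b| := by nlinarith [abs_nonneg (a - b)]

lemma norm_smul_add_sub_smul_add_sq {E : Type*} [NormedAddCommGroup E] [InnerProductSpace ℝ E]
    {u z z' : E} (hu : ‖u‖ = 1) (hz : ⟪u, z⟫ = 0) (hz' : ⟪u, z'⟫ = 0) (s t : ℝ) :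
    ‖(s • u + z) - (t • u + z')‖ ^ 2 = (s - t) ^ 2 + ‖z - z'‖ ^ 2 := by
  have hdecomp : (s • u + z) - (t • u + z') = (s - t) • u + (z - z') := by
    rw [sub_smul]; abel
  have horth : ⟪(s - t) • u, z - z'⟫ = 0 := by
    rw [inner_smul_left, inner_sub_right, hz, hz', sub_zero, mul_zero]
  rw [hdecomp, norm_add_sq_real, horth, norm_smul, hu, Real.norm_eq_abs, mul_one, sq_abs]
  ring

/-- Let `x = √(1-‖z‖²) u + z` and `x' = √(1-‖z'‖²) u + z'` with `z, z'` orthogonal to the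
unit vector `u` and `‖z‖, ‖z'‖ ≤ ν < 1`.  Then `‖x - x'‖ ≤ (1/√(1-ν²)) ‖z - z'‖`. -/
theorem stmt14 {E : Type*} [NormedAddCommGroup E] [InnerProductSpace ℝ E]
    (u z z' : E) (ν : ℝ) (hu : ‖u‖ = 1)
    (hz : ⟪u, z⟫ = 0) (hz' : ⟪u, z'⟫ = 0)
    (hzν : ‖z‖ ≤ ν) (hz'ν : ‖z'‖ ≤ ν) (hν : ν < 1) :
    ‖(Real.sqrt (1 - ‖z‖ ^ 2) • u + z) - (Real.sqrt (1 - ‖z'‖ ^ 2) • u + z')‖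
      ≤ (1 / Real.sqrt (1 - ν ^ 2)) * ‖z - z'‖ := by
  have hν0 : 0 ≤ ν := (norm_nonneg z).trans hzν
  have hν2 : 0 < 1 - ν ^ 2 := by nlinarith
  have hslope := abs_sqrt_one_sub_sq_sub_sqrt_one_sub_sq_le
    ((abs_norm z).le.trans hzν) ((abs_norm z').le.trans hz'ν) hν
  have hsqrt : |√(1 - ‖z‖ ^ 2) - √(1 - ‖z'‖ ^ 2)| ≤ ν / √(1 - ν ^ 2) * ‖z - z'‖ :=
    hslope.trans (by gcongr; exact abs_norm_sub_norm_le z z')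
  rw [← pow_le_pow_iff_left₀ (norm_nonneg _) (by positivity) two_ne_zero,
    norm_smul_add_sub_smul_add_sq hu hz hz', ← sq_abs (√(1 - ‖z‖ ^ 2) - _)]
  calc |√(1 - ‖z‖ ^ 2) - √(1 - ‖z'‖ ^ 2)| ^ 2 + ‖z - z'‖ ^ 2
      ≤ (ν / √(1 - ν ^ 2) * ‖z - z'‖) ^ 2 + ‖z - z'‖ ^ 2 := by gcongr
    _ = (1 / √(1 - ν ^ 2) * ‖z - z'‖) ^ 2 := by
        rw [mul_pow, mul_pow, div_pow, div_pow, Real.sq_sqrt hν2.le]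
        field_simp
        ring
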